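/- Let 1 ≤ s < p ≤ ∞. There exists F ∈ L^p(ℝ) such that for each t > 0, F ∗ Θ_t ∉ L^s(ℝ). Concretely, F(x) = x^{-1/p}/log²(x) for x ≥ e and F(x) = 0 otherwise, works. -/

import Mathlib

/-!
Let `F x = x ^ (-1/p) / log x ^ 2` on `[e, ∞)`. For `p < ∞`, `|F| ^ p = 1 / (x log^(2p) x)` with
`2p > 1`, which is integrable at infinity (its antiderivative is a negative power of `log`);
for `p = ∞`, `F` is bounded. On the other hand `Θ_t ≥ Θ_t(1)` on `[0, 1]` and `F` decreases on
`[e, ∞)`, so `(F ∗ Θ_t)(x) ≥ Θ_t(1) F(x)` for `x ≥ e + 1`. Since `F ^ s = x ^ (-s/p) / log^(2s) x`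
with `s/p < 1`, and powers of `log` are negligible against powers of `x`, `F ∗ Θ_t ∉ L^s`.
-/

open MeasureTheory Real ENNReal Set Filter Topology

noncomputable def heatKernel (t x : ℝ) : ℝ :=
  Real.exp (-x ^ 2 / (4 * t)) / (2 * Real.sqrt (Real.pi * t))

lemma integrableOn_Ioi_inv_div_log_rpow {a c : ℝ} (ha : 1 < a) (hc : 1 < c) :
    IntegrableOn (fun x : ℝ => x⁻¹ / Real.log x ^ a) (Ioi c) := by
  have hlog : ∀ x ∈ Ici c, 0 < Real.log x := fun x hx => log_pos (hc.trans_le hx)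
  have hderiv : ∀ x ∈ Ici c,
      HasDerivAt (fun y => -(a - 1)⁻¹ * Real.log y ^ (1 - a)) (x⁻¹ / Real.log x ^ a) x := by
    intro x hx
    have hx0 : x ≠ 0 := by linarith [mem_Ici.mp hx]
    refine (((hasDerivAt_rpow_const (p := 1 - a) (Or.inl (hlog x hx).ne')).comp x
      (hasDerivAt_log hx0)).const_mul (-(a - 1)⁻¹)).congr_deriv ?_
    have ha1 : a - 1 ≠ 0 := (sub_pos.mpr ha).ne'
    rw [show 1 - a - 1 = -a by ring, rpow_neg (hlog x hx).le]
    field_simp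
    ring
  have hlimit : Tendsto (fun y => -(a - 1)⁻¹ * Real.log y ^ (1 - a)) atTop (𝓝 0) := by
    simpa [neg_sub] using
      ((tendsto_rpow_neg_atTop (sub_pos.mpr ha)).comp tendsto_log_atTop).const_mul (-(a - 1)⁻¹)
  refine integrableOn_Ioi_deriv_of_nonneg' hderiv (fun x hx => ?_) hlimit
  have hlog_x := hlog x (mem_Ici.mpr (le_of_lt hx))
  have hx0 : 0 < x := by linarith [mem_Ioi.mp hx]
  positivity

lemma not_integrableOn_Ioi_rpow_neg_div_log_rpow {a : ℝ} (ha : a < 1) (b X : ℝ) :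
    ¬ IntegrableOn (fun x : ℝ => x ^ (-a) / Real.log x ^ b) (Ioi X) := by
  intro h
  -- compare with `x ^ (-a')`, `a < a' < 1`: eventually `log x ^ b ≤ x ^ (a' - a)`
  obtain ⟨a', ha', ha'1⟩ := exists_between ha
  obtain ⟨Y, hY⟩ := eventually_atTop.mp
    ((isLittleO_log_rpow_rpow_atTop b (by linarith : 0 < a' - a)).bound one_pos)
  set Z := max (max X Y) 1
  have hZ : ∀ x ∈ Ioi Z, x ^ (-a') ≤ x ^ (-a) / Real.log x ^ b := by
    intro x hx
    have hx1 : 1 < x := (le_max_right _ _).trans_lt hx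
    have hlog : 0 < Real.log x := log_pos hx1
    have hx0 : 0 < x := by linarith
    have hbound := hY x ((le_max_right X Y).trans (le_max_left _ _) |>.trans hx.le)
    rw [one_mul, norm_of_nonneg (by positivity), norm_of_nonneg (by positivity)] at hbound
    calc x ^ (-a') = x ^ (-a) / x ^ (a' - a) := by rw [← rpow_sub hx0]; ring_nf
      _ ≤ x ^ (-a) / Real.log x ^ b := by gcongr
  have hint : IntegrableOn (fun x => x ^ (-a')) (Ioi Z) := by
    refine (h.mono_set (Ioi_subset_Ioi ((le_max_left X Y).trans (le_max_left _ _)))).mono'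
      (by fun_prop) ?_
    filter_upwards [ae_restrict_mem measurableSet_Ioi] with x hx
    have hx0 : 0 < x := one_pos.trans_le ((le_max_right _ _).trans hx.le)
    rw [norm_of_nonneg (by positivity)]
    exact hZ x hx
  rw [integrableOn_Ioi_rpow_iff (one_pos.trans_le (le_max_right _ _))] at hint
  linarith

section HeatKernel

variable {t : ℝ}

lemma heatKernel_pos (ht : 0 < t) (x : ℝ) : 0 < heatKernel t x := by
  unfold heatKernel
  have := sqrt_pos.mpr (mul_pos pi_pos ht)
  positivity

lemma integrable_heatKernel (ht : 0 < t) : Integrable (heatKernel t) := by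
  refine ((integrable_exp_neg_mul_sq (b := (4 * t)⁻¹) (by positivity)).div_const
    (2 * sqrt (π * t))).congr (ae_of_all _ fun x => ?_)
  simp only [heatKernel]
  ring_nf

lemma heatKernel_le_heatKernel_of_abs_le (ht : 0 < t) {x y : ℝ} (h : |x| ≤ |y|) :
    heatKernel t y ≤ heatKernel t x := by
  unfold heatKernel
  gcongr exp (-?_ / _) / _
  exact sq_le_sq.mpr h

end HeatKernel

lemma mul_le_integral_mul_sub_of_antitoneOn {F K : ℝ → ℝ} {c δ κ x : ℝ} (hF : 0 ≤ F)
    (hK : 0 ≤ K) (hFK : Integrable fun y => F y * K (x - y)) (hanti : AntitoneOn F (Ici c))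
    (hκ : ∀ z ∈ Icc 0 δ, κ ≤ K z) (hδ : 0 ≤ δ) (hx : c + δ ≤ x) :
    δ * κ * F x ≤ ∫ y, F y * K (x - y) :=
  calc δ * κ * F x = ∫ _ in Icc (x - δ) x, F x * κ := by
        rw [setIntegral_const, volume_real_Icc, _root_.sub_sub_cancel, max_eq_left hδ,
          smul_eq_mul]
        ring
    _ ≤ ∫ y in Icc (x - δ) x, F y * K (x - y) := by
        refine setIntegral_mono_on (integrableOn_const (by simp)) hFK.integrableOn
          measurableSet_Icc fun y ⟨hy₁, hy₂⟩ => mul_le_mul_of_nonneg ?_ ?_ (hF x) (hK _)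
        · exact hanti (by simp only [mem_Ici]; linarith) (by simp only [mem_Ici]; linarith) hy₂
        · exact hκ _ ⟨by linarith, by linarith⟩
    _ ≤ ∫ y, F y * K (x - y) :=
        setIntegral_le_integral hFK (ae_of_all _ fun y => mul_nonneg (hF y) (hK _))

/-- `q = p.toReal`, so `q = 0` encodes `p = ∞`, where `x ^ (-(1 / q)) = 1` since `1 / 0 = 0`. -/
noncomputable def powLogDecay (q x : ℝ) : ℝ :=
  if exp 1 ≤ x then x ^ (-(1 / q)) / Real.log x ^ 2 else 0

namespace powLogDecay

variable {q : ℝ}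

lemma nonneg : 0 ≤ powLogDecay q := by
  intro x
  unfold powLogDecay
  split_ifs with hx
  · have := (exp_pos 1).trans_le hx
    positivity
  · exact le_rfl

lemma le_one (hq : 0 ≤ q) (x : ℝ) : powLogDecay q x ≤ 1 := by
  unfold powLogDecay
  split_ifs with hx
  · have h1 : 1 ≤ x := (one_le_exp zero_le_one).trans hx
    have hlog : 1 ≤ Real.log x := (le_log_iff_exp_le (by positivity)).mpr hx
    calc x ^ (-(1 / q)) / Real.log x ^ 2 ≤ 1 / 1 ^ 2 := by
          gcongr
          exact rpow_le_one_of_one_le_of_nonpos h1 (by simp; positivity)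
      _ = 1 := by norm_num
  · exact zero_le_one

lemma measurable : Measurable (powLogDecay q) :=
  Measurable.ite measurableSet_Ici (by fun_prop) measurable_const

lemma antitoneOn (hq : 0 ≤ q) : AntitoneOn (powLogDecay q) (Ici (exp 1)) := by
  intro x (hx : exp 1 ≤ x) y (hy : exp 1 ≤ y) hxy
  have hx0 : 0 < x := (exp_pos 1).trans_le hx
  have hlog : 1 ≤ Real.log x := (le_log_iff_exp_le hx0).mpr hx
  simp only [powLogDecay, if_pos hx, if_pos hy]
  refine div_le_div₀ (by positivity) (rpow_le_rpow_of_nonpos hx0 hxy (by simp; positivity))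
    (by positivity) ?_
  gcongr

lemma rpow_eq {x : ℝ} (hx : exp 1 ≤ x) (r : ℝ) :
    powLogDecay q x ^ r = x ^ (-(r / q)) / Real.log x ^ (2 * r) := by
  have hx0 : 0 < x := (exp_pos 1).trans_le hx
  have hlog : 0 ≤ Real.log x := log_nonneg ((one_le_exp zero_le_one).trans hx)
  rw [powLogDecay, if_pos hx, div_rpow (by positivity) (by positivity), ← rpow_mul hx0.le,
    ← Real.rpow_natCast, ← rpow_mul hlog]
  congr 2
  ring

lemma memLp {p : ℝ≥0∞} (hp : 2⁻¹ < p) : MemLp (powLogDecay p.toReal) p volume := by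
  rcases eq_or_ne p ⊤ with rfl | hp_top
  · refine memLp_top_of_bound measurable.aestronglyMeasurable 1 (ae_of_all _ fun x => ?_)
    rw [norm_of_nonneg (nonneg x)]
    exact le_one ENNReal.toReal_nonneg x
  have hq : 1 < 2 * p.toReal := by
    have := (ENNReal.toReal_lt_toReal (by simp) hp_top).mpr hp
    simp only [ENNReal.toReal_inv, ENNReal.toReal_ofNat] at this
    linarith
  have hq0 : p.toReal ≠ 0 := by linarith
  rw [← integrable_norm_rpow_iff measurable.aestronglyMeasurable
    (ENNReal.toReal_ne_zero.mp hq0).1 hp_top]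
  refine (Iff.mpr integrableOn_Ici_iff_integrableOn_Ioi
    ((integrableOn_Ioi_inv_div_log_rpow hq (Real.one_lt_exp_iff.mpr one_pos)).congr_fun
      (fun x hx => ?_) measurableSet_Ioi)).integrable_of_forall_notMem_eq_zero fun x hx => ?_
  · rw [norm_of_nonneg (nonneg x), rpow_eq (le_of_lt hx), div_self hq0, Real.rpow_neg_one]
  · rw [powLogDecay, if_neg (notMem_Ici.mp hx).not_ge, norm_zero, zero_rpow hq0]

lemma not_memLp_restrict_Ioi {s : ℝ≥0∞} (hs0 : s ≠ 0) (hs_top : s ≠ ⊤) (hsq : s.toReal / q < 1)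
    (X : ℝ) : ¬ MemLp (powLogDecay q) s (volume.restrict (Ioi X)) := by
  intro h
  have hint := IntegrableOn.mono_set (h.integrable_norm_rpow hs0 hs_top)
    (Ioi_subset_Ioi (le_max_left X (exp 1)))
  refine not_integrableOn_Ioi_rpow_neg_div_log_rpow hsq (2 * s.toReal) (max X (exp 1))
    (hint.congr_fun (fun x hx => ?_) measurableSet_Ioi)
  dsimp only
  rw [norm_of_nonneg (nonneg x), rpow_eq ((le_max_right _ _).trans hx.le)]

lemma heatKernel_one_mul_le_integral_mul_heatKernel (hq : 0 ≤ q) {t x : ℝ} (ht : 0 < t)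
    (hx : exp 1 + 1 ≤ x) :
    heatKernel t 1 * powLogDecay q x ≤ ∫ y, powLogDecay q y * heatKernel t (x - y) := by
  have hbdd (y : ℝ) : ‖powLogDecay q y‖ ≤ 1 := by
    rw [norm_of_nonneg (nonneg y)]
    exact le_one hq y
  have hΘ (z : ℝ) (hz : z ∈ Icc 0 1) : heatKernel t 1 ≤ heatKernel t z :=
    heatKernel_le_heatKernel_of_abs_le ht (by rw [abs_one, abs_of_nonneg hz.1]; exact hz.2)
  simpa using mul_le_integral_mul_sub_of_antitoneOn nonneg (fun z => (heatKernel_pos ht z).le)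
    (((integrable_heatKernel ht).comp_sub_left x).bdd_mul measurable.aestronglyMeasurable
      (ae_of_all _ hbdd)) (antitoneOn hq) hΘ zero_le_one hx

end powLogDecay

lemma ENNReal.toReal_div_toReal_lt_one {s p : ℝ≥0∞} (hsp : s < p) :
    s.toReal / p.toReal < 1 := by
  rcases eq_or_ne p ⊤ with rfl | hp_top
  · simp
  · rw [div_lt_one (ENNReal.toReal_pos (pos_of_gt hsp).ne' hp_top)]
    exact (ENNReal.toReal_lt_toReal hsp.ne_top hp_top).mpr hsp

/-- For `1 ≤ s < p ≤ ∞`, there is `F ∈ L^p(ℝ)` such that `F ∗ Θ_t ∉ L^s(ℝ)` for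
each `t > 0`.  Concretely `F(x) = x^{-1/p}/log²x` for `x ≥ e`, `F(x) = 0` otherwise,
works (for `p = ∞` the factor `x^{-1/p}` is `1`, as `(⊤ : ℝ≥0∞).toReal = 0`). -/
theorem exists_memLp_convolution_not_memLp (s p : ℝ≥0∞)
    (hs : 1 ≤ s) (hsp : s < p) :
    ∃ F : ℝ → ℝ,
      (F = fun x : ℝ =>
        if Real.exp 1 ≤ x then x ^ (-(1 / p.toReal)) / (Real.log x) ^ 2 else 0) ∧
      MemLp F p (volume : Measure ℝ) ∧
      ∀ t > (0:ℝ),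
        ¬ MemLp (fun x => ∫ y : ℝ, F y * heatKernel t (x - y)) s (volume : Measure ℝ) := by
  have hp : (2⁻¹ : ℝ≥0∞) < p := ((by norm_num : (2⁻¹ : ℝ≥0∞) < 1).trans_le hs).trans hsp
  refine ⟨powLogDecay p.toReal, rfl, powLogDecay.memLp hp, fun t ht hG => ?_⟩
  refine powLogDecay.not_memLp_restrict_Ioi (zero_lt_one.trans_le hs).ne' hsp.ne_top
    (ENNReal.toReal_div_toReal_lt_one hsp) (exp 1 + 1)
    ((hG.restrict _).of_le_mul (c := (heatKernel t 1)⁻¹)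
      powLogDecay.measurable.aestronglyMeasurable ?_)
  filter_upwards [ae_restrict_mem measurableSet_Ioi] with x hx
  rw [le_inv_mul_iff₀ (heatKernel_pos ht 1), norm_of_nonneg (powLogDecay.nonneg x)]
  exact (powLogDecay.heatKernel_one_mul_le_integral_mul_heatKernel ENNReal.toReal_nonneg ht
    hx.le).trans (le_norm_self _)
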